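/- arXiv:1408.0313 — 2 statements merged into one kernel-verified Lean document; each statement's English description precedes it below -/
import Mathlib

section
/- Let p, q ∈ ℝⁿ be regular vectors and let g ∈ (ℝ ∪ {−∞})ⁿ and h ∈ ℝⁿ be vectors with g ≤ h. Set Δ = (q⁻ p)^{1/2} and μ = Δ ⊕ q⁻ g ⊕ h⁻ p. Then the minimum of q⁻ x ⊕ x⁻ p over all regular vectors x ∈ ℝⁿ with g ≤ x ≤ h equals μ, and a regular vector x with g ≤ x ≤ h attains this minimum if and only if μ⁻¹ p ⊕ g ≤ x ≤ (μ⁻¹ q⁻ ⊕ h⁻)⁻, where μ⁻¹ = −μ. -/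
/-!
For regular `x` the objective is `maxᵢ max (xᵢ - qᵢ) (pᵢ - xᵢ)`. Adding the two terms at index `i`
gives `pᵢ - qᵢ ≤ 2 · objective`, and the box constraints give `q⁻ g ≤ q⁻ x` and `h⁻ p ≤ x⁻ p`, so `μ`
bounds the objective from below. Conversely, residuation (`a⁻¹ b ≤ c ↔ b ≤ a c` for `a ≠ 𝟘`) turns
"objective `≤ μ`" on the box into `μ⁻¹ p ⊕ g ≤ x ≤ (μ⁻¹ q⁻ ⊕ h⁻)⁻`, and the lower end `μ⁻¹ p ⊕ g` of
this interval lies in the box and attains `μ` because `μ` dominates each of its three terms.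
-/

open Finset

noncomputable section

namespace MaxPlus

/-- Max-plus multiplicative inverse: `-a` for real `a`, `⊥` for `⊥`. -/
def tinv (a : WithBot ℝ) : WithBot ℝ := WithBot.map (fun r => -r) a

/-- Max-plus rational power `a^(1/k) = a / k`. -/
def trt (a : WithBot ℝ) (k : ℕ) : WithBot ℝ := WithBot.map (fun r => r / (k : ℝ)) a

/-- A vector is regular if it has no `⊥` (= -∞) entries. -/
def Reg {n : ℕ} (x : Fin n → WithBot ℝ) : Prop := ∀ i, x i ≠ ⊥

/-- `cdot q x = q⁻ x`, the max-plus product of the conjugate row vector `q⁻` with `x`. -/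
def cdot {n : ℕ} (q x : Fin n → WithBot ℝ) : WithBot ℝ :=
  Finset.univ.sup fun i => tinv (q i) + x i

/-- Max-plus matrix-vector product. -/
def mulVec {m n : ℕ} (A : Matrix (Fin m) (Fin n) (WithBot ℝ)) (x : Fin n → WithBot ℝ) :
    Fin m → WithBot ℝ := fun i => Finset.univ.sup fun j => A i j + x j

/-- Max-plus matrix product. -/
def tmul {l m n : ℕ} (A : Matrix (Fin l) (Fin m) (WithBot ℝ))
    (B : Matrix (Fin m) (Fin n) (WithBot ℝ)) : Matrix (Fin l) (Fin n) (WithBot ℝ) :=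
  fun i j => Finset.univ.sup fun k => A i k + B k j

/-- Multiplicative conjugate transpose of a matrix. -/
def conjM {m n : ℕ} (A : Matrix (Fin m) (Fin n) (WithBot ℝ)) :
    Matrix (Fin n) (Fin m) (WithBot ℝ) := fun i j => tinv (A j i)

/-- Max-plus identity matrix. -/
def tId {n : ℕ} : Matrix (Fin n) (Fin n) (WithBot ℝ) := fun i j => if i = j then 0 else ⊥

/-- Max-plus matrix power. -/
def tpow {n : ℕ} (A : Matrix (Fin n) (Fin n) (WithBot ℝ)) : ℕ → Matrix (Fin n) (Fin n) (WithBot ℝ)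
  | 0 => tId
  | k + 1 => tmul A (tpow A k)

/-- Max-plus trace. -/
def ttr {n : ℕ} (A : Matrix (Fin n) (Fin n) (WithBot ℝ)) : WithBot ℝ :=
  Finset.univ.sup fun i => A i i

/-- `Tr(A) = tr A ⊕ tr A² ⊕ ⋯ ⊕ tr Aⁿ`. -/
def TrOp {n : ℕ} (A : Matrix (Fin n) (Fin n) (WithBot ℝ)) : WithBot ℝ :=
  (Finset.Icc 1 n).sup fun m => ttr (tpow A m)

/-- Kleene star `A* = I ⊕ A ⊕ ⋯ ⊕ A^(n-1)`. -/
def kstar {n : ℕ} (A : Matrix (Fin n) (Fin n) (WithBot ℝ)) : Matrix (Fin n) (Fin n) (WithBot ℝ) :=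
  fun i j => (Finset.range n).sup fun k => tpow A k i j

/-- Max-plus spectral radius `λ = ⊕_{m=1}^n (tr A^m)^(1/m)`. -/
def specRad {n : ℕ} (A : Matrix (Fin n) (Fin n) (WithBot ℝ)) : WithBot ℝ :=
  (Finset.Icc 1 n).sup fun m => trt (ttr (tpow A m)) m

/-- `prodAB A B [i₁, …, i_k] = A B^{i₁} A B^{i₂} ⋯ A B^{i_k}`. -/
def prodAB {n : ℕ} (A B : Matrix (Fin n) (Fin n) (WithBot ℝ)) :
    List ℕ → Matrix (Fin n) (Fin n) (WithBot ℝ)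
  | [] => tId
  | i :: t => tmul (tmul A (tpow B i)) (prodAB A B t)

/-- The all-ones (all-`𝟙 = 0`) vector. -/
def onesV (n : ℕ) : Fin n → WithBot ℝ := fun _ => 0

end MaxPlus

open MaxPlus

namespace MaxPlus

section Scalar

variable {a b c : WithBot ℝ}

lemma tinv_ne_bot (ha : a ≠ ⊥) : tinv a ≠ ⊥ := by
  lift a to ℝ using ha
  exact WithBot.coe_ne_bot

lemma add_tinv_self (ha : a ≠ ⊥) : a + tinv a = 0 := by
  lift a to ℝ using ha
  exact WithBot.coe_eq_coe.2 (add_neg_cancel a)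

lemma tinv_add_le_iff (ha : a ≠ ⊥) : tinv a + b ≤ c ↔ b ≤ a + c := by
  lift a to ℝ using ha
  induction b using WithBot.recBotCoe with
  | bot => simp
  | coe b =>
    induction c using WithBot.recBotCoe with
    | bot => simp [tinv]
    | coe c =>
      simp only [tinv, WithBot.map_coe, ← WithBot.coe_add, WithBot.coe_le_coe]
      constructor <;> intro <;> linarith

lemma le_tinv_iff (ha : a ≠ ⊥) : b ≤ tinv a ↔ a + b ≤ 0 := by
  lift a to ℝ using ha
  induction b using WithBot.recBotCoe with
  | bot => simp
  | coe b =>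
    simp only [tinv, WithBot.map_coe, ← WithBot.coe_add, WithBot.coe_le_coe,
      ← WithBot.coe_zero]
    constructor <;> intro <;> linarith

lemma tinv_le_tinv (ha : a ≠ ⊥) (hab : a ≤ b) : tinv b ≤ tinv a := by
  lift a to ℝ using ha
  lift b to ℝ using ne_bot_of_le_ne_bot WithBot.coe_ne_bot hab
  exact WithBot.coe_le_coe.2 (neg_le_neg (WithBot.coe_le_coe.1 hab))

lemma trt_two_le_iff : trt a 2 ≤ c ↔ a ≤ c + c := by
  induction a using WithBot.recBotCoe with
  | bot => simp [trt]
  | coe a =>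
    induction c using WithBot.recBotCoe with
    | bot => simp [trt]
    | coe c =>
      simp only [trt, WithBot.map_coe, ← WithBot.coe_add, WithBot.coe_le_coe]
      constructor <;> intro <;> linarith

lemma sup_le_and_le_tinv_sup_iff {m p q g h x : WithBot ℝ} (hm : m ≠ ⊥) (hh : h ≠ ⊥)
    (hx : x ≠ ⊥) (hgx : g ≤ x) (hxh : x ≤ h) :
    (tinv m + p) ⊔ g ≤ x ∧ x ≤ tinv ((tinv m + tinv q) ⊔ tinv h) ↔
      tinv q + x ≤ m ∧ tinv x + p ≤ m := by
  have hlow : (tinv m + p) ⊔ g ≤ x ↔ tinv x + p ≤ m := by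
    rw [sup_le_iff, and_iff_left hgx, tinv_add_le_iff hm, tinv_add_le_iff hx, add_comm]
  have hup : x ≤ tinv ((tinv m + tinv q) ⊔ tinv h) ↔ tinv q + x ≤ m := by
    rw [le_tinv_iff (ne_bot_of_le_ne_bot (tinv_ne_bot hh) le_sup_right), max_add, max_le_iff,
      add_assoc, tinv_add_le_iff hm, tinv_add_le_iff hh, add_zero, add_zero, and_iff_left hxh]
  rw [hlow, hup, and_comm]

end Scalar

section Vector

variable {n : ℕ} {p q g h x y : Fin n → WithBot ℝ} {c : WithBot ℝ}

lemma le_cdot (q x : Fin n → WithBot ℝ) (i : Fin n) : tinv (q i) + x i ≤ cdot q x :=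
  Finset.le_sup (f := fun i => tinv (q i) + x i) (Finset.mem_univ i)

lemma cdot_le_iff : cdot q x ≤ c ↔ ∀ i, tinv (q i) + x i ≤ c := by
  simp [cdot]

lemma cdot_mono_right (hxy : ∀ i, x i ≤ y i) : cdot q x ≤ cdot q y :=
  cdot_le_iff.2 fun i => (add_le_add_right (hxy i) _).trans (le_cdot q y i)

lemma cdot_anti_left (hx : Reg x) (hxy : ∀ i, x i ≤ y i) : cdot y p ≤ cdot x p :=
  cdot_le_iff.2 fun i => (add_le_add_left (tinv_le_tinv (hx i) (hxy i)) _).trans (le_cdot x p i)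

lemma sup_cdot_le_iff :
    cdot q x ⊔ cdot x p ≤ c ↔ ∀ i, tinv (q i) + x i ≤ c ∧ tinv (x i) + p i ≤ c := by
  simp only [sup_le_iff, cdot_le_iff, forall_and]

def chebBound (p q g h : Fin n → WithBot ℝ) : WithBot ℝ :=
  trt (cdot q p) 2 ⊔ cdot q g ⊔ cdot h p

lemma trt_cdot_le_sup_cdot (hx : Reg x) : trt (cdot q p) 2 ≤ cdot q x ⊔ cdot x p := by
  refine trt_two_le_iff.2 (cdot_le_iff.2 fun i => ?_)
  calc tinv (q i) + p i = (tinv (q i) + x i) + (tinv (x i) + p i) := by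
        rw [add_assoc, ← add_assoc (x i), add_tinv_self (hx i), zero_add]
    _ ≤ (cdot q x ⊔ cdot x p) + (cdot q x ⊔ cdot x p) :=
        add_le_add ((le_cdot q x i).trans le_sup_left) ((le_cdot x p i).trans le_sup_right)

lemma chebBound_le_sup_cdot (hx : Reg x) (hgx : ∀ i, g i ≤ x i) (hxh : ∀ i, x i ≤ h i) :
    chebBound p q g h ≤ cdot q x ⊔ cdot x p :=
  sup_le (sup_le (trt_cdot_le_sup_cdot hx) ((cdot_mono_right hgx).trans le_sup_left))
    ((cdot_anti_left hx hxh).trans le_sup_right)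

lemma chebBound_ne_bot (hp : Reg p) (hq : Reg q) (i : Fin n) : chebBound p q g h ≠ ⊥ := by
  intro hμ
  have hqp : cdot q p ≤ ⊥ := by
    have hle : trt (cdot q p) 2 ≤ chebBound p q g h := le_sup_left.trans le_sup_left
    simpa [hμ] using trt_two_le_iff.1 hle
  exact WithBot.add_ne_bot.2 ⟨tinv_ne_bot (hq i), hp i⟩ (le_bot_iff.1 ((le_cdot q p i).trans hqp))

def chebMinimizer (p q g h : Fin n → WithBot ℝ) : Fin n → WithBot ℝ :=
  fun i => (tinv (chebBound p q g h) + p i) ⊔ g i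

lemma chebMinimizer_reg (hp : Reg p) (hq : Reg q) : Reg (chebMinimizer p q g h) := fun i =>
  ne_bot_of_le_ne_bot (WithBot.add_ne_bot.2 ⟨tinv_ne_bot (chebBound_ne_bot hp hq i), hp i⟩)
    le_sup_left

lemma chebMinimizer_le (hp : Reg p) (hq : Reg q) (hh : Reg h) (hgh : ∀ i, g i ≤ h i)
    (i : Fin n) :
    chebMinimizer p q g h i ≤ h i := by
  refine sup_le ((tinv_add_le_iff (chebBound_ne_bot hp hq i)).2 ?_) (hgh i)
  rw [add_comm, ← tinv_add_le_iff (hh i)]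
  exact (le_cdot h p i).trans le_sup_right

lemma sup_cdot_chebMinimizer_le (hp : Reg p) (hq : Reg q) :
    cdot q (chebMinimizer p q g h) ⊔ cdot (chebMinimizer p q g h) p ≤ chebBound p q g h := by
  refine sup_cdot_le_iff.2 fun i => ⟨?_, ?_⟩
  all_goals have hμ := chebBound_ne_bot (g := g) (h := h) hp hq i
  · rw [chebMinimizer, add_max]
    refine max_le ?_ ((le_cdot q g i).trans (le_sup_right.trans le_sup_left))
    rw [add_left_comm, tinv_add_le_iff hμ]
    exact (le_cdot q p i).trans (trt_two_le_iff.1 (le_sup_left.trans le_sup_left))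
  · rw [tinv_add_le_iff (chebMinimizer_reg hp hq i), add_comm]
    exact ((tinv_add_le_iff hμ).1 le_rfl).trans (add_le_add_right le_sup_left _)

end Vector

end MaxPlus

/-- constrained Chebyshev-like approximation with box constraints. -/
theorem stmt_0 {n : ℕ} (p q g h : Fin n → WithBot ℝ)
    (hp : Reg p) (hq : Reg q) (hh : Reg h) (hgh : ∀ i, g i ≤ h i)
    (μ : WithBot ℝ)
    (hμ : μ = trt (cdot q p) 2 ⊔ cdot q g ⊔ cdot h p) :
    IsLeast {v | ∃ x : Fin n → WithBot ℝ, Reg x ∧ (∀ i, g i ≤ x i ∧ x i ≤ h i) ∧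
        cdot q x ⊔ cdot x p = v} μ ∧
      ∀ x : Fin n → WithBot ℝ, Reg x → (∀ i, g i ≤ x i ∧ x i ≤ h i) →
        (cdot q x ⊔ cdot x p = μ ↔
          ∀ i, (tinv μ + p i) ⊔ g i ≤ x i ∧
            x i ≤ tinv ((tinv μ + tinv (q i)) ⊔ tinv (h i))) := by
  obtain rfl : μ = chebBound p q g h := hμ
  have hlower : ∀ x, Reg x → (∀ i, g i ≤ x i ∧ x i ≤ h i) →
      chebBound p q g h ≤ cdot q x ⊔ cdot x p := fun x hx hbox =>
    chebBound_le_sup_cdot hx (fun i => (hbox i).1) (fun i => (hbox i).2)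
  have hbox : ∀ i, g i ≤ chebMinimizer p q g h i ∧ chebMinimizer p q g h i ≤ h i :=
    fun i => ⟨le_sup_right, chebMinimizer_le hp hq hh hgh i⟩
  refine ⟨⟨⟨chebMinimizer p q g h, chebMinimizer_reg hp hq, hbox,
    le_antisymm (sup_cdot_chebMinimizer_le hp hq) (hlower _ (chebMinimizer_reg hp hq) hbox)⟩,
    ?_⟩, fun x hx hbox => ?_⟩
  · rintro v ⟨x, hx, hbox, rfl⟩
    exact hlower x hx hbox
  · rw [le_antisymm_iff, and_iff_left (hlower x hx hbox), sup_cdot_le_iff]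
    exact forall_congr' fun i => (sup_le_and_le_tinv_sup_iff (chebBound_ne_bot hp hq i) (hh i)
      (hx i) (hbox i).1 (hbox i).2).symm
end
end

section
/- Let A be an m×n matrix all of whose columns are regular (equivalently, all entries of A are real) and let B ∈ (ℝ ∪ {−∞})^{l×n} be a column-regular matrix. Denote by a_i and b_i the i-th columns of A and B. Then the maximum of ‖B x‖ ⊗ ‖(A x)⁻‖ over all regular vectors x ∈ ℝⁿ equals Δ = ‖B A⁻‖, and a regular vector x is a maximizer if and only if there exist α ∈ ℝ and indices k attaining max_{1≤i≤n} ‖b_i‖ ⊗ ‖a_i⁻‖ and s attaining max_{1≤i≤m} (−a_{ik}) such that x_k = α ⊗ ‖a_k⁻‖ and x_j ≤ α − a_{sj} for all j ≠ k. -/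
open Finset

noncomputable section

open MaxPlus


namespace MaxPlus

lemma tinv_coe (r : ℝ) : tinv (r : WithBot ℝ) = ((-r : ℝ) : WithBot ℝ) := rfl

lemma tinv_eq_bot {a : WithBot ℝ} : tinv a = ⊥ ↔ a = ⊥ := by
  cases a <;> simp [tinv]

lemma tinv_le_tinv_s9 {r : ℝ} {b : WithBot ℝ} (h : (r : WithBot ℝ) ≤ b) :
    tinv b ≤ ((-r : ℝ) : WithBot ℝ) := by
  cases b with
  | bot => simp at h
  | coe s =>
    rw [show tinv (s : WithBot ℝ) = ((-s : ℝ) : WithBot ℝ) from rfl]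
    exact WithBot.coe_le_coe.mpr (neg_le_neg (WithBot.coe_le_coe.mp h))

lemma wle {ι : Type*} [Fintype ι] (f : ι → WithBot ℝ) (i : ι) : f i ≤ Finset.univ.sup f :=
  Finset.le_sup (Finset.mem_univ i)

lemma exists_sup_eq {ι : Type*} [Fintype ι] [Nonempty ι] (f : ι → WithBot ℝ) :
    ∃ i, Finset.univ.sup f = f i := by
  obtain ⟨i, -, h⟩ := Finset.exists_mem_eq_sup Finset.univ Finset.univ_nonempty f
  exact ⟨i, h⟩

end MaxPlus

/-- maximization of `‖B x‖ ⊗ ‖(A x)⁻‖`. -/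
theorem stmt_9 {l m n : ℕ} (hl : 0 < l) (hm : 0 < m) (hn : 0 < n)
    (A : Matrix (Fin m) (Fin n) (WithBot ℝ)) (hA : ∀ i j, A i j ≠ ⊥)
    (B : Matrix (Fin l) (Fin n) (WithBot ℝ)) (hB : ∀ j, ∃ i, B i j ≠ ⊥)
    (Δ : WithBot ℝ)
    (hΔ : Δ = Finset.univ.sup fun ij : Fin l × Fin m => tmul B (conjM A) ij.1 ij.2) :
    IsGreatest {v | ∃ x : Fin n → WithBot ℝ, Reg x ∧
        (Finset.univ.sup fun i => mulVec B x i)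
          + (Finset.univ.sup fun i => tinv (mulVec A x i)) = v} Δ ∧
      ∀ x : Fin n → WithBot ℝ, Reg x →
        ((Finset.univ.sup fun i => mulVec B x i)
            + (Finset.univ.sup fun i => tinv (mulVec A x i)) = Δ ↔
          ∃ (α : ℝ) (k : Fin n) (s : Fin m),
            (∀ i : Fin n, (Finset.univ.sup fun r => B r i)
                  + (Finset.univ.sup fun r => tinv (A r i)) ≤
                (Finset.univ.sup fun r => B r k)
                  + (Finset.univ.sup fun r => tinv (A r k))) ∧
            (∀ i : Fin m, tinv (A i k) ≤ tinv (A s k)) ∧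
            x k = (α : WithBot ℝ) + (Finset.univ.sup fun r => tinv (A r k)) ∧
            ∀ j, j ≠ k → x j ≤ (α : WithBot ℝ) + tinv (A s j)) := by
  haveI : Nonempty (Fin l) := Fin.pos_iff_nonempty.mp hl
  haveI : Nonempty (Fin m) := Fin.pos_iff_nonempty.mp hm
  haveI : Nonempty (Fin n) := Fin.pos_iff_nonempty.mp hn
  obtain ⟨a, ha⟩ : ∃ a : Fin m → Fin n → ℝ, ∀ i j, A i j = ((a i j : ℝ) : WithBot ℝ) :=
    ⟨fun i j => (A i j).unbot (hA i j), fun i j => (WithBot.coe_unbot _ _).symm⟩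
  have hΔ2 : Δ = Finset.univ.sup (fun k => (Finset.univ.sup fun r => B r k)
      + (Finset.univ.sup fun r => tinv (A r k))) := by
    rw [hΔ]
    apply le_antisymm
    · apply Finset.sup_le
      rintro ⟨i, j⟩ -
      show tmul B (conjM A) i j ≤ _
      apply Finset.sup_le
      intro k _
      refine le_trans ?_ (wle (fun k => (Finset.univ.sup fun r => B r k)
        + (Finset.univ.sup fun r => tinv (A r k))) k)
      exact add_le_add (wle (fun r => B r k) i) (wle (fun r => tinv (A r k)) j)
    · apply Finset.sup_le
      intro k _
      obtain ⟨i0, hi0⟩ := exists_sup_eq (fun r => B r k)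
      obtain ⟨j0, hj0⟩ := exists_sup_eq (fun r => tinv (A r k))
      rw [hi0, hj0]
      refine le_trans ?_ (wle (fun ij : Fin l × Fin m => tmul B (conjM A) ij.1 ij.2) (i0, j0))
      show _ ≤ tmul B (conjM A) i0 j0
      exact wle (fun k => B i0 k + conjM A k j0) k
  have upper : ∀ x : Fin n → WithBot ℝ, Reg x →
      (Finset.univ.sup fun i => mulVec B x i)
        + (Finset.univ.sup fun i => tinv (mulVec A x i)) ≤ Δ := by
    intro x hx
    obtain ⟨i0, hi0⟩ := exists_sup_eq (fun i => mulVec B x i)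
    obtain ⟨k0, hk0⟩ := exists_sup_eq (fun k => B i0 k + x k)
    obtain ⟨j0, hj0⟩ := exists_sup_eq (fun j => tinv (mulVec A x j))
    obtain ⟨ξ, hξ⟩ : ∃ r : ℝ, x k0 = (r : WithBot ℝ) :=
      ⟨(x k0).unbot (hx k0), (WithBot.coe_unbot _ _).symm⟩
    have h1 : ((a j0 k0 + ξ : ℝ) : WithBot ℝ) ≤ mulVec A x j0 := by
      rw [WithBot.coe_add, ← ha, ← hξ]
      exact wle (fun k => A j0 k + x k) k0
    have h2 : tinv (mulVec A x j0) ≤ ((-(a j0 k0 + ξ) : ℝ) : WithBot ℝ) := tinv_le_tinv_s9 h1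
    have hBi : mulVec B x i0 = B i0 k0 + x k0 := hk0
    rw [hi0, hj0, hBi, hξ]
    calc B i0 k0 + (ξ : WithBot ℝ) + tinv (mulVec A x j0)
        ≤ B i0 k0 + (ξ : WithBot ℝ) + ((-(a j0 k0 + ξ) : ℝ) : WithBot ℝ) :=
          add_le_add le_rfl h2
      _ = B i0 k0 + tinv (A j0 k0) := by
          rw [add_assoc, ← WithBot.coe_add, ha j0 k0, tinv_coe]
          have : ξ + -(a j0 k0 + ξ) = -(a j0 k0) := by ring
          rw [this]
      _ ≤ (Finset.univ.sup fun r => B r k0) + (Finset.univ.sup fun r => tinv (A r k0)) :=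
          add_le_add (wle (fun r => B r k0) i0) (wle (fun r => tinv (A r k0)) j0)
      _ ≤ Δ := by
          rw [hΔ2]
          exact wle (fun k => (Finset.univ.sup fun r => B r k)
            + (Finset.univ.sup fun r => tinv (A r k))) k0
  have suff : ∀ (x : Fin n → WithBot ℝ), Reg x → ∀ (α : ℝ) (k : Fin n) (s : Fin m),
      (∀ i, (Finset.univ.sup fun r => B r i) + (Finset.univ.sup fun r => tinv (A r i)) ≤
        (Finset.univ.sup fun r => B r k) + (Finset.univ.sup fun r => tinv (A r k))) →
      (∀ i, tinv (A i k) ≤ tinv (A s k)) →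
      x k = (α : WithBot ℝ) + (Finset.univ.sup fun r => tinv (A r k)) →
      (∀ j, j ≠ k → x j ≤ (α : WithBot ℝ) + tinv (A s j)) →
      (Finset.univ.sup fun i => mulVec B x i)
        + (Finset.univ.sup fun i => tinv (mulVec A x i)) = Δ := by
    intro x hx α k s h1 h2 h3 h4
    have hΔk : Δ = (Finset.univ.sup fun r => B r k) + (Finset.univ.sup fun r => tinv (A r k)) := by
      rw [hΔ2]
      exact le_antisymm (Finset.sup_le fun i _ => h1 i) (wle (fun k => (Finset.univ.sup fun r => B r k)
        + (Finset.univ.sup fun r => tinv (A r k))) k)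
    have hank : (Finset.univ.sup fun r => tinv (A r k)) = tinv (A s k) :=
      le_antisymm (Finset.sup_le fun r _ => h2 r) (wle (fun r => tinv (A r k)) s)
    have hxk : x k = ((α - a s k : ℝ) : WithBot ℝ) := by
      rw [h3, hank, ha s k, tinv_coe, ← WithBot.coe_add]
      exact congrArg _ (by ring)
    have hAxs : mulVec A x s = ((α : ℝ) : WithBot ℝ) := by
      apply le_antisymm
      · apply Finset.sup_le
        intro r _
        by_cases hr : r = k
        · subst hr
          rw [hxk, ha s r, ← WithBot.coe_add]
          exact le_of_eq (congrArg _ (by ring))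
        · calc A s r + x r ≤ A s r + ((α : WithBot ℝ) + tinv (A s r)) :=
                add_le_add le_rfl (h4 r hr)
            _ = ((α : ℝ) : WithBot ℝ) := by
                rw [ha s r, tinv_coe, ← WithBot.coe_add, ← WithBot.coe_add]
                exact congrArg _ (by ring)
      · have h5 : A s k + x k ≤ mulVec A x s := wle (fun r => A s r + x r) k
        rw [hxk, ha s k, ← WithBot.coe_add] at h5
        calc ((α : ℝ) : WithBot ℝ) = ((a s k + (α - a s k) : ℝ) : WithBot ℝ) :=
              congrArg _ (by ring)
          _ ≤ _ := h5
    have hask : ∀ j, a s k ≤ a j k := by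
      intro j
      have h6 := h2 j
      rw [ha j k, ha s k, tinv_coe, tinv_coe, WithBot.coe_le_coe] at h6
      linarith
    have hAxj : ∀ j, ((α : ℝ) : WithBot ℝ) ≤ mulVec A x j := by
      intro j
      refine le_trans ?_ (wle (fun r => A j r + x r) k : A j k + x k ≤ mulVec A x j)
      rw [hxk, ha j k, ← WithBot.coe_add, WithBot.coe_le_coe]
      have := hask j; linarith
    have hT : (Finset.univ.sup fun i => tinv (mulVec A x i)) = ((-α : ℝ) : WithBot ℝ) := by
      apply le_antisymm
      · exact Finset.sup_le fun j _ => tinv_le_tinv_s9 (hAxj j)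
      · have h7 : tinv (mulVec A x s) ≤ Finset.univ.sup fun i => tinv (mulVec A x i) :=
          wle (fun i => tinv (mulVec A x i)) s
        rw [hAxs, tinv_coe] at h7
        exact h7
    obtain ⟨i1, hi1⟩ := exists_sup_eq (fun r => B r k)
    have hBx : ((α : ℝ) : WithBot ℝ) + Δ ≤ (Finset.univ.sup fun i => mulVec B x i) := by
      have h6 : B i1 k + x k ≤ mulVec B x i1 := wle (fun r => B i1 r + x r) k
      have h7 : mulVec B x i1 ≤ Finset.univ.sup fun i => mulVec B x i :=
        wle (fun i => mulVec B x i) i1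
      refine le_trans ?_ (le_trans h6 h7)
      rw [hΔk, hi1, h3]
      exact le_of_eq (add_left_comm _ _ _)
    have hz : ((α : ℝ) : WithBot ℝ) + ((-α : ℝ) : WithBot ℝ) = 0 := by
      rw [← WithBot.coe_add, add_neg_cancel, WithBot.coe_zero]
    refine le_antisymm (upper x hx) ?_
    calc Δ = Δ + 0 := (add_zero Δ).symm
      _ = Δ + (((α : ℝ) : WithBot ℝ) + ((-α : ℝ) : WithBot ℝ)) := by rw [hz]
      _ = (((α : ℝ) : WithBot ℝ) + Δ) + ((-α : ℝ) : WithBot ℝ) := by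
          rw [← add_assoc, add_comm Δ]
      _ ≤ _ := add_le_add hBx hT.ge
  have nec : ∀ x : Fin n → WithBot ℝ, Reg x →
      (Finset.univ.sup fun i => mulVec B x i)
        + (Finset.univ.sup fun i => tinv (mulVec A x i)) = Δ →
      ∃ (α : ℝ) (k : Fin n) (s : Fin m),
        (∀ i : Fin n, (Finset.univ.sup fun r => B r i)
              + (Finset.univ.sup fun r => tinv (A r i)) ≤
            (Finset.univ.sup fun r => B r k)
              + (Finset.univ.sup fun r => tinv (A r k))) ∧
        (∀ i : Fin m, tinv (A i k) ≤ tinv (A s k)) ∧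
        x k = (α : WithBot ℝ) + (Finset.univ.sup fun r => tinv (A r k)) ∧
        ∀ j, j ≠ k → x j ≤ (α : WithBot ℝ) + tinv (A s j) := by
    intro x hx hfx
    have hΔbot : Δ ≠ ⊥ := by
      set k0 : Fin n := ⟨0, hn⟩
      obtain ⟨ib, hib⟩ := hB k0
      have h1 : B ib k0 ≤ Finset.univ.sup fun r => B r k0 := wle (fun r => B r k0) ib
      have h2 : (Finset.univ.sup fun r => B r k0) ≠ ⊥ := fun h => hib (le_bot_iff.mp (h ▸ h1))
      have h3 : (Finset.univ.sup fun r => tinv (A r k0)) ≠ ⊥ := by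
        intro h
        have h4 : tinv (A (⟨0, hm⟩ : Fin m) k0) ≤ Finset.univ.sup fun r => tinv (A r k0) :=
          wle (fun r => tinv (A r k0)) _
        rw [h, le_bot_iff, tinv_eq_bot] at h4
        exact hA _ _ h4
      have h4 : (Finset.univ.sup fun r => B r k0) + (Finset.univ.sup fun r => tinv (A r k0)) ≤ Δ := by
        rw [hΔ2]
        exact wle (fun k => (Finset.univ.sup fun r => B r k)
          + (Finset.univ.sup fun r => tinv (A r k))) k0
      intro hbot
      rw [hbot, le_bot_iff, WithBot.add_eq_bot] at h4
      tauto
    have hBxbot : (Finset.univ.sup fun i => mulVec B x i) ≠ ⊥ := by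
      intro h; rw [h, WithBot.bot_add] at hfx; exact hΔbot hfx.symm
    have hTbot : (Finset.univ.sup fun i => tinv (mulVec A x i)) ≠ ⊥ := by
      intro h; rw [h, WithBot.add_bot] at hfx; exact hΔbot hfx.symm
    obtain ⟨s, hs⟩ := exists_sup_eq (fun j => tinv (mulVec A x j))
    have hAxs_ne : mulVec A x s ≠ ⊥ := by
      intro h
      apply hTbot
      rw [hs, h]
      rfl
    obtain ⟨α, hα⟩ : ∃ α : ℝ, mulVec A x s = ((α : ℝ) : WithBot ℝ) :=
      ⟨(mulVec A x s).unbot hAxs_ne, (WithBot.coe_unbot _ _).symm⟩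
    obtain ⟨ξ, hξ⟩ : ∃ ξ : Fin n → ℝ, ∀ r, x r = ((ξ r : ℝ) : WithBot ℝ) :=
      ⟨fun r => (x r).unbot (hx r), fun r => (WithBot.coe_unbot _ _).symm⟩
    have hxr : ∀ r, ξ r ≤ α - a s r := by
      intro r
      have h5 : A s r + x r ≤ mulVec A x s := wle (fun r => A s r + x r) r
      rw [hα, ha s r, hξ r, ← WithBot.coe_add, WithBot.coe_le_coe] at h5
      linarith
    have hcond4 : ∀ j, x j ≤ ((α : ℝ) : WithBot ℝ) + tinv (A s j) := by
      intro j
      rw [hξ j, ha s j, tinv_coe, ← WithBot.coe_add, WithBot.coe_le_coe]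
      have := hxr j; linarith
    obtain ⟨i, hi⟩ := exists_sup_eq (fun i => mulVec B x i)
    obtain ⟨k, hk⟩ := exists_sup_eq (fun r => B i r + x r)
    have hk' : mulVec B x i = B i k + x k := hk
    have hBik_ne : B i k ≠ ⊥ := by
      intro h
      apply hBxbot
      rw [hi, hk', h, WithBot.bot_add]
    obtain ⟨b, hb⟩ : ∃ b : ℝ, B i k = ((b : ℝ) : WithBot ℝ) :=
      ⟨(B i k).unbot hBik_ne, (WithBot.coe_unbot _ _).symm⟩
    have hfx' : ((b + ξ k + -α : ℝ) : WithBot ℝ) = Δ := by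
      rw [← hfx, hi, hk', hs, hα, hb, hξ k, tinv_coe, ← WithBot.coe_add, ← WithBot.coe_add]
    have hchain1 : Δ ≤ B i k + tinv (A s k) := by
      rw [← hfx', hb, ha s k, tinv_coe, ← WithBot.coe_add, WithBot.coe_le_coe]
      have := hxr k; linarith
    have hchain2 : B i k + tinv (A s k) ≤
        (Finset.univ.sup fun r => B r k) + (Finset.univ.sup fun r => tinv (A r k)) :=
      add_le_add (wle (fun r => B r k) i) (wle (fun r => tinv (A r k)) s)
    have hchain3 : (Finset.univ.sup fun r => B r k)
        + (Finset.univ.sup fun r => tinv (A r k)) ≤ Δ := by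
      rw [hΔ2]
      exact wle (fun k => (Finset.univ.sup fun r => B r k)
        + (Finset.univ.sup fun r => tinv (A r k))) k
    have hEq2 : (Finset.univ.sup fun r => B r k)
        + (Finset.univ.sup fun r => tinv (A r k)) = Δ :=
      le_antisymm hchain3 (le_trans hchain1 hchain2)
    have hEq1 : B i k + tinv (A s k) =
        (Finset.univ.sup fun r => B r k) + (Finset.univ.sup fun r => tinv (A r k)) :=
      le_antisymm hchain2 (le_trans hchain3 hchain1)
    obtain ⟨s2, hs2⟩ := exists_sup_eq (fun r => tinv (A r k))
    have hbnk_ne : (Finset.univ.sup fun r => B r k) ≠ ⊥ := by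
      intro h
      have h5 : B i k ≤ Finset.univ.sup fun r => B r k := wle (fun r => B r k) i
      rw [h, le_bot_iff] at h5
      exact hBik_ne h5
    obtain ⟨β, hβ⟩ : ∃ β : ℝ, (Finset.univ.sup fun r => B r k) = ((β : ℝ) : WithBot ℝ) :=
      ⟨_, (WithBot.coe_unbot _ hbnk_ne).symm⟩
    have hγ : (Finset.univ.sup fun r => tinv (A r k)) = ((-(a s2 k) : ℝ) : WithBot ℝ) := by
      rw [hs2, ha s2 k, tinv_coe]
    have hEq1' : b + -(a s k) = β + -(a s2 k) := by
      have h5 := hEq1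
      rw [hb, ha s k, tinv_coe, hβ, hγ, ← WithBot.coe_add, ← WithBot.coe_add] at h5
      exact_mod_cast h5
    have hble : b ≤ β := by
      have h5 : B i k ≤ Finset.univ.sup fun r => B r k := wle (fun r => B r k) i
      rw [hb, hβ, WithBot.coe_le_coe] at h5
      exact h5
    have htle : -(a s k) ≤ -(a s2 k) := by
      have h5 : tinv (A s k) ≤ Finset.univ.sup fun r => tinv (A r k) :=
        wle (fun r => tinv (A r k)) s
      rw [ha s k, tinv_coe, hγ, WithBot.coe_le_coe] at h5
      exact h5
    have heq_t : -(a s k) = -(a s2 k) := by linarith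
    have hcond2 : ∀ r, tinv (A r k) ≤ tinv (A s k) := by
      intro r
      have h5 : tinv (A r k) ≤ Finset.univ.sup fun r => tinv (A r k) :=
        wle (fun r => tinv (A r k)) r
      rw [hγ, ← heq_t, ← tinv_coe, ← ha s k] at h5
      exact h5
    have hcond1 : ∀ i' : Fin n, (Finset.univ.sup fun r => B r i')
          + (Finset.univ.sup fun r => tinv (A r i')) ≤
        (Finset.univ.sup fun r => B r k) + (Finset.univ.sup fun r => tinv (A r k)) := by
      intro i'
      rw [hEq2, hΔ2]
      exact wle (fun k => (Finset.univ.sup fun r => B r k)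
        + (Finset.univ.sup fun r => tinv (A r k))) i'
    have hcond3 : x k = ((α : ℝ) : WithBot ℝ) + (Finset.univ.sup fun r => tinv (A r k)) := by
      have hΔval : Δ = ((β + -(a s2 k) : ℝ) : WithBot ℝ) := by
        rw [← hEq2, hβ, hγ, ← WithBot.coe_add]
      have h5 : b + ξ k + -α = β + -(a s2 k) := by
        have h6 := hfx'.trans hΔval
        exact_mod_cast h6
      rw [hξ k, hγ, ← WithBot.coe_add, WithBot.coe_inj]
      linarith
    exact ⟨α, k, s, hcond1, hcond2, hcond3, fun j _ => hcond4 j⟩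
  refine ⟨⟨?_, ?_⟩, ?_⟩
  · obtain ⟨k1, hk1⟩ := exists_sup_eq
      (fun k => (Finset.univ.sup fun r => B r k) + (Finset.univ.sup fun r => tinv (A r k)))
    obtain ⟨s1, hs1⟩ := exists_sup_eq (fun r => tinv (A r k1))
    refine ⟨fun j => tinv (A s1 j), fun j => ?_, ?_⟩
    · show tinv (A s1 j) ≠ ⊥
      rw [ha s1 j, tinv_coe]; exact WithBot.coe_ne_bot
    · apply suff _ (fun j => by rw [ha s1 j, tinv_coe]; exact WithBot.coe_ne_bot) 0 k1 s1
      · intro i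
        rw [← hk1]
        exact wle (fun k => (Finset.univ.sup fun r => B r k)
          + (Finset.univ.sup fun r => tinv (A r k))) i
      · intro r
        rw [← hs1]
        exact wle (fun r => tinv (A r k1)) r
      · show tinv (A s1 k1) = ((0 : ℝ) : WithBot ℝ) + (Finset.univ.sup fun r => tinv (A r k1))
        rw [WithBot.coe_zero, zero_add, hs1]
      · intro j _
        show tinv (A s1 j) ≤ ((0 : ℝ) : WithBot ℝ) + tinv (A s1 j)
        rw [WithBot.coe_zero, zero_add]
  · rintro v ⟨x, hx, rfl⟩
    exact upper x hx
  · intro x hx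
    exact ⟨nec x hx, fun ⟨α, k, s, h1, h2, h3, h4⟩ => suff x hx α k s h1 h2 h3 h4⟩
end
end
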